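/- arXiv:2508.12539 — 3 statements merged into one kernel-verified Lean document; each statement's English description precedes it below -/
import Mathlib

section
/- Let 0 ≤ A, B ≤ 1, 0 < g, g' ≤ 1, ε > 0, and λ = e^ε − 1. If g/g' ≥ (1 + Aλ)/(1 + Bλ), then (1 + (A + g)λ)/(1 + (B + g')λ) ≤ g/g'. -/
/-- If g/g' ≥ (1+Aλ)/(1+Bλ) with λ = e^ε − 1, then
(1+(A+g)λ)/(1+(B+g')λ) ≤ g/g'. -/
theorem stmt_5 (A B g g' ε : ℝ)
    (hA : A ∈ Set.Icc (0:ℝ) 1) (hB : B ∈ Set.Icc (0:ℝ) 1)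
    (hg : 0 < g) (hg1 : g ≤ 1) (hg' : 0 < g') (hg'1 : g' ≤ 1) (hε : 0 < ε)
    (h : (1 + A * (Real.exp ε - 1)) / (1 + B * (Real.exp ε - 1)) ≤ g / g') :
    (1 + (A + g) * (Real.exp ε - 1)) / (1 + (B + g') * (Real.exp ε - 1)) ≤ g / g' := by
  set l := Real.exp ε - 1 with hl
  have hlpos : 0 < l := by
    have := Real.add_one_le_exp ε; simp [hl]; nlinarith [Real.exp_pos ε]
  have hB0 := hB.1
  have hA0 := hA.1
  have hd1 : 0 < 1 + B * l := by nlinarith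
  have hd2 : 0 < 1 + (B + g') * l := by nlinarith
  rw [div_le_div_iff₀ hd1 hg'] at h
  rw [div_le_div_iff₀ hd2 hg']
  nlinarith
end

section
/- Suppose there exist two values x, x' of X such that the conditional distributions G = P(X̂|X=x) and G' = P(X̂|X=x') have disjoint supports (gᵢ ≠ 0 implies g'ᵢ = 0). Then the supremum over ε-LDP mechanisms M̂ perturbing X̂ of the correlation-induced privacy leakage ln sup_{ŷ} [Σ_u p(ŷ|u)gᵤ]/[Σ_v p(ŷ|v)g'ᵥ] equals ε. -/
open Finset

/-- Auxiliary mechanism: the optimal binary randomized-response channel. -/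
noncomputable def auxQ (ε g : ℝ) : Fin 2 → ℝ :=
  ![if g ≠ 0 then Real.exp ε / (Real.exp ε + 1) else 1 / (Real.exp ε + 1),
    if g ≠ 0 then 1 / (Real.exp ε + 1) else Real.exp ε / (Real.exp ε + 1)]

lemma auxQ_zero (ε g : ℝ) :
    auxQ ε g 0 = if g ≠ 0 then Real.exp ε / (Real.exp ε + 1) else 1 / (Real.exp ε + 1) := rfl

lemma auxQ_one (ε g : ℝ) :
    auxQ ε g 1 = if g ≠ 0 then 1 / (Real.exp ε + 1) else Real.exp ε / (Real.exp ε + 1) := rfl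

/-- If the conditional distributions G = P(X̂|X=x) and G' = P(X̂|X=x') have
disjoint supports, then the supremum over all ε-LDP mechanisms perturbing X̂
of the correlation-induced privacy leakage equals ε. -/
theorem stmt_13 (t : ℕ) (ht : 0 < t) (ε : ℝ) (hε : 0 ≤ ε)
    (G G' : Fin t → ℝ)
    (hG0 : ∀ i, 0 ≤ G i) (hG1 : ∑ i, G i = 1)
    (hG'0 : ∀ i, 0 ≤ G' i) (hG'1 : ∑ i, G' i = 1)
    (hdisj : ∀ i, G i ≠ 0 → G' i = 0) :
    IsLUB
      { L : ℝ | ∃ (m : ℕ) (_ : 0 < m) (Q : Fin t → Fin m → ℝ),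
          (∀ u y, 0 < Q u y) ∧ (∀ u, ∑ y, Q u y = 1) ∧
          (∀ y u v, Q u y ≤ Real.exp ε * Q v y) ∧
          L = ⨆ y : Fin m,
              Real.log ((∑ u, Q u y * G u) / (∑ v, Q v y * G' v)) }
      ε := by
  have hexp : (0:ℝ) < Real.exp ε := Real.exp_pos ε
  have he1 : (1:ℝ) ≤ Real.exp ε := Real.one_le_exp hε
  have hden : (0:ℝ) < Real.exp ε + 1 := by positivity
  obtain ⟨u0, -, hu0⟩ : ∃ i ∈ Finset.univ, G i ≠ 0 :=
    Finset.exists_ne_zero_of_sum_ne_zero (by rw [hG1]; norm_num)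
  obtain ⟨v0, -, hv0⟩ : ∃ i ∈ Finset.univ, G' i ≠ 0 :=
    Finset.exists_ne_zero_of_sum_ne_zero (by rw [hG'1]; norm_num)
  constructor
  · -- upper bound
    rintro L ⟨m, hm, Q, hQpos, hQsum, hLDP, rfl⟩
    haveI : Nonempty (Fin m) := ⟨⟨0, hm⟩⟩
    apply ciSup_le
    intro y
    have hD : 0 < ∑ v, Q v y * G' v := by
      apply Finset.sum_pos' (fun v _ => mul_nonneg (hQpos v y).le (hG'0 v))
      exact ⟨v0, Finset.mem_univ _,
        mul_pos (hQpos v0 y) ((hG'0 v0).lt_of_ne (Ne.symm hv0))⟩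
    have hN : 0 < ∑ u, Q u y * G u := by
      apply Finset.sum_pos' (fun u _ => mul_nonneg (hQpos u y).le (hG0 u))
      exact ⟨u0, Finset.mem_univ _,
        mul_pos (hQpos u0 y) ((hG0 u0).lt_of_ne (Ne.symm hu0))⟩
    have hNle : ∑ u, Q u y * G u ≤ Real.exp ε * ∑ v, Q v y * G' v := by
      calc ∑ u, Q u y * G u
          ≤ ∑ u, (Real.exp ε * ∑ v, Q v y * G' v) * G u := by
            apply Finset.sum_le_sum; intro u _
            apply mul_le_mul_of_nonneg_right _ (hG0 u)
            calc Q u y = ∑ v, Q u y * G' v := by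
                  rw [← Finset.mul_sum, hG'1, mul_one]
              _ ≤ ∑ v, Real.exp ε * (Q v y * G' v) := by
                  apply Finset.sum_le_sum; intro v _
                  rw [← mul_assoc]
                  exact mul_le_mul_of_nonneg_right (hLDP y u v) (hG'0 v)
              _ = Real.exp ε * ∑ v, Q v y * G' v := by rw [Finset.mul_sum]
        _ = (Real.exp ε * ∑ v, Q v y * G' v) * ∑ u, G u := by
            rw [← Finset.mul_sum]
        _ = Real.exp ε * ∑ v, Q v y * G' v := by rw [hG1, mul_one]
    rw [Real.log_le_iff_le_exp (div_pos hN hD), div_le_iff₀ hD]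
    exact hNle
  · -- ε is the least upper bound: show ε ∈ S
    intro b hb
    apply hb
    refine ⟨2, two_pos, fun u => auxQ ε (G u), ?_, ?_, ?_, ?_⟩
    · intro u y
      show 0 < auxQ ε (G u) y
      obtain hy | hy : y = 0 ∨ y = 1 := by omega
      · subst hy; rw [auxQ_zero]; split_ifs <;> positivity
      · subst hy; rw [auxQ_one]; split_ifs <;> positivity
    · intro u
      show ∑ y, auxQ ε (G u) y = 1
      rw [Fin.sum_univ_two, auxQ_zero, auxQ_one]
      split_ifs <;> field_simp <;> try ring
    · intro y u v
      have hkey : ∀ x z : ℝ, x ≤ Real.exp ε * z →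
          x / (Real.exp ε + 1) ≤ Real.exp ε * (z / (Real.exp ε + 1)) := by
        intro x z h
        rw [mul_div_assoc']
        exact (div_le_div_iff_of_pos_right hden).mpr h
      show auxQ ε (G u) y ≤ Real.exp ε * auxQ ε (G v) y
      obtain hy | hy : y = 0 ∨ y = 1 := by omega
      all_goals subst hy
      all_goals simp only [auxQ_zero, auxQ_one]
      all_goals split_ifs <;> apply hkey <;> nlinarith [he1, hexp]
    · have hnum0 : ∑ u, auxQ ε (G u) 0 * G u
          = Real.exp ε / (Real.exp ε + 1) := by
        simp only [auxQ_zero]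
        rw [Finset.sum_congr rfl (fun u _ => ?_), ← Finset.mul_sum, hG1, mul_one]
        by_cases h : G u = 0 <;> simp [h]
      have hden0 : ∑ v, auxQ ε (G v) 0 * G' v = 1 / (Real.exp ε + 1) := by
        simp only [auxQ_zero]
        rw [Finset.sum_congr rfl (fun v _ => ?_), ← Finset.mul_sum, hG'1, mul_one]
        by_cases h : G v = 0
        · simp [h]
        · simp [h, hdisj v h]
      have hnum1 : ∑ u, auxQ ε (G u) 1 * G u = 1 / (Real.exp ε + 1) := by
        simp only [auxQ_one]
        rw [Finset.sum_congr rfl (fun u _ => ?_), ← Finset.mul_sum, hG1, mul_one]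
        by_cases h : G u = 0 <;> simp [h]
      have hden1 : ∑ v, auxQ ε (G v) 1 * G' v
          = Real.exp ε / (Real.exp ε + 1) := by
        simp only [auxQ_one]
        rw [Finset.sum_congr rfl (fun v _ => ?_), ← Finset.mul_sum, hG'1, mul_one]
        by_cases h : G v = 0
        · simp [h]
        · simp [h, hdisj v h]
      have hf : ∀ y : Fin 2,
          Real.log ((∑ u, auxQ ε (G u) y * G u) / (∑ v, auxQ ε (G v) y * G' v))
            = if y = 0 then ε else -ε := by
        intro y
        obtain hy | hy : y = 0 ∨ y = 1 := by omega
        · subst hy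
          rw [if_pos rfl, hnum0, hden0,
            show Real.exp ε / (Real.exp ε + 1) / (1 / (Real.exp ε + 1))
              = Real.exp ε from by field_simp, Real.log_exp]
        · subst hy
          rw [if_neg (by norm_num), hnum1, hden1,
            show 1 / (Real.exp ε + 1) / (Real.exp ε / (Real.exp ε + 1))
              = (Real.exp ε)⁻¹ from by field_simp, Real.log_inv, Real.log_exp]
      have hsup : (⨆ y : Fin 2, Real.log
          ((∑ u, auxQ ε (G u) y * G u) / (∑ v, auxQ ε (G v) y * G' v)))
          = ⨆ y : Fin 2, (if y = 0 then ε else -ε) := iSup_congr hf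
      rw [hsup]
      refine le_antisymm ?_ (ciSup_le fun y => ?_)
      · have := le_ciSup (f := fun y : Fin 2 => if y = 0 then ε else -ε)
          (Set.Finite.bddAbove (Set.finite_range _)) 0
        simpa using this
      · split_ifs
        · exact le_rfl
        · linarith
end

section
/- Let H(S) = (Σ_{i∉S} gᵢ + e^ε Σ_{j∈S} gⱼ)/(Σ_{i∉S} g'ᵢ + e^ε Σ_{j∈S} g'ⱼ) where G, G' are probability vectors of length t and ε > 0. The greedy algorithm that sorts indices by decreasing ratio gᵢ/g'ᵢ and adds index i to S whenever gᵢ/g'ᵢ ≥ (1 + A(e^ε−1))/(1 + B(e^ε−1)) (with A = Σ_{j∈S} gⱼ, B = Σ_{j∈S} g'ⱼ for the current S) outputs a set S* maximizing H over all subsets S ⊆ [t]. -/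
open Finset

/-- Objective H(S) = (Σ_{i∉S} gᵢ + e^ε Σ_{j∈S} gⱼ)/(Σ_{i∉S} g'ᵢ + e^ε Σ_{j∈S} g'ⱼ). -/
noncomputable def Hval {t : ℕ} (g g' : Fin t → ℝ) (ε : ℝ) (S : Finset (Fin t)) : ℝ :=
  ((∑ i ∈ Finset.univ \ S, g i) + Real.exp ε * ∑ j ∈ S, g j) /
    ((∑ i ∈ Finset.univ \ S, g' i) + Real.exp ε * ∑ j ∈ S, g' j)

/-- One greedy step: add index i to S whenever
gᵢ/g'ᵢ ≥ (1 + A(e^ε−1))/(1 + B(e^ε−1)) with A = Σ_{j∈S} gⱼ, B = Σ_{j∈S} g'ⱼ. -/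
noncomputable def greedyStep {t : ℕ} (g g' : Fin t → ℝ) (ε : ℝ)
    (S : Finset (Fin t)) (i : Fin t) : Finset (Fin t) :=
  if (1 + (∑ j ∈ S, g j) * (Real.exp ε - 1)) /
      (1 + (∑ j ∈ S, g' j) * (Real.exp ε - 1)) ≤ g i / g' i
  then insert i S else S

/-- The greedy threshold T(S) = (1 + A(e^ε−1))/(1 + B(e^ε−1)). -/
noncomputable def Tval {t : ℕ} (g g' : Fin t → ℝ) (ε : ℝ) (S : Finset (Fin t)) : ℝ :=
  (1 + (∑ j ∈ S, g j) * (Real.exp ε - 1)) /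
    (1 + (∑ j ∈ S, g' j) * (Real.exp ε - 1))

lemma greedyStep_eq {t : ℕ} (g g' : Fin t → ℝ) (ε : ℝ) (S : Finset (Fin t)) (i : Fin t) :
    greedyStep g g' ε S i = if Tval g g' ε S ≤ g i / g' i then insert i S else S := rfl

lemma mediant_aux (e A B x y : ℝ) (he : 1 < e) (hB : 0 ≤ B) (hx : 0 ≤ x) (hy : 0 < y)
    (h : (1 + A * (e - 1)) / (1 + B * (e - 1)) ≤ x / y) :
    (1 + A * (e - 1)) / (1 + B * (e - 1)) ≤
        (1 + (x + A) * (e - 1)) / (1 + (y + B) * (e - 1)) ∧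
      (1 + (x + A) * (e - 1)) / (1 + (y + B) * (e - 1)) ≤ x / y := by
  have hD : (0:ℝ) < 1 + B * (e - 1) := by nlinarith
  have hD' : (0:ℝ) < 1 + (y + B) * (e - 1) := by nlinarith
  rw [div_le_div_iff₀ hD hy] at h
  constructor
  · rw [div_le_div_iff₀ hD hD']
    nlinarith
  · rw [div_le_div_iff₀ hD' hy]
    nlinarith

lemma skip_all {t : ℕ} (g g' : Fin t → ℝ) (ε : ℝ) :
    ∀ (l : List (Fin t)) (S : Finset (Fin t)),
      (∀ i ∈ l, g i / g' i < Tval g g' ε S) →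
      l.foldl (greedyStep g g' ε) S = S := by
  intro l
  induction l with
  | nil => intro S _; rfl
  | cons a l ih =>
    intro S h
    have hstep : greedyStep g g' ε S a = S := by
      rw [greedyStep_eq, if_neg (not_le.2 (h a (List.mem_cons_self (a := a) (l := l))))]
    rw [List.foldl_cons, hstep]
    exact ih S fun i hi => h i (List.mem_cons_of_mem a hi)

lemma greedy_spec {t : ℕ} (g g' : Fin t → ℝ) (ε : ℝ) (he : 1 < Real.exp ε)
    (hg0 : ∀ i, 0 ≤ g i) (hg'0 : ∀ i, 0 < g' i) :
    ∀ (l : List (Fin t)) (S : Finset (Fin t)),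
      l.Pairwise (fun i j => g j / g' j ≤ g i / g' i) →
      (∀ i ∈ l, i ∉ S) → l.Nodup →
      S ⊆ l.foldl (greedyStep g g' ε) S ∧
      (∀ i ∈ l.foldl (greedyStep g g' ε) S, i ∉ S → i ∈ l) ∧
      Tval g g' ε S ≤ Tval g g' ε (l.foldl (greedyStep g g' ε) S) ∧
      (∀ i ∈ l.foldl (greedyStep g g' ε) S, i ∉ S →
        Tval g g' ε (l.foldl (greedyStep g g' ε) S) ≤ g i / g' i) ∧
      (∀ i ∈ l, i ∉ l.foldl (greedyStep g g' ε) S →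
        g i / g' i ≤ Tval g g' ε (l.foldl (greedyStep g g' ε) S)) := by
  intro l
  induction l with
  | nil =>
    intro S _ _ _
    exact ⟨subset_rfl, by simp, le_refl _, fun i hi hni => absurd hi hni, by simp⟩
  | cons a l ih =>
    intro S hsort hdisj hnd
    have hsortl : l.Pairwise (fun i j => g j / g' j ≤ g i / g' i) := hsort.of_cons
    have hhead : ∀ i ∈ l, g i / g' i ≤ g a / g' a := fun i hi => List.rel_of_pairwise_cons hsort hi
    have hndl : l.Nodup := hnd.of_cons
    have hanl : a ∉ l := (List.nodup_cons.1 hnd).1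
    by_cases hc : Tval g g' ε S ≤ g a / g' a
    · -- add a
      have hstep : greedyStep g g' ε S a = insert a S := by
        rw [greedyStep_eq, if_pos hc]
      have haS : a ∉ S := hdisj a (List.mem_cons_self (a := a) (l := l))
      have hBnn : 0 ≤ ∑ j ∈ S, g' j := Finset.sum_nonneg fun j _ => (hg'0 j).le
      have hsumg : ∑ j ∈ insert a S, g j = g a + ∑ j ∈ S, g j := Finset.sum_insert haS
      have hsumg' : ∑ j ∈ insert a S, g' j = g' a + ∑ j ∈ S, g' j := Finset.sum_insert haS
      have hmed := mediant_aux (Real.exp ε) (∑ j ∈ S, g j) (∑ j ∈ S, g' j)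
        (g a) (g' a) he hBnn (hg0 a) (hg'0 a) hc
      have hT1 : Tval g g' ε S ≤ Tval g g' ε (insert a S) := by
        unfold Tval; rw [hsumg, hsumg']; exact hmed.1
      have hT2 : Tval g g' ε (insert a S) ≤ g a / g' a := by
        unfold Tval; rw [hsumg, hsumg']; exact hmed.2
      have hdisj' : ∀ i ∈ l, i ∉ insert a S := by
        intro i hi
        simp only [Finset.mem_insert, not_or]
        exact ⟨fun h => hanl (h ▸ hi), hdisj i (List.mem_cons_of_mem a hi)⟩
      obtain ⟨hsub, hmem2, hT, hin, hout⟩ := ih (insert a S) hsortl hdisj' hndl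
      rw [List.foldl_cons, hstep]
      set R := l.foldl (greedyStep g g' ε) (insert a S) with hR
      have haR : a ∈ R := hsub (Finset.mem_insert_self a S)
      have hTRa : Tval g g' ε R ≤ g a / g' a := by
        by_cases hRS : R = insert a S
        · rw [hRS]; exact hT2
        · obtain ⟨j, hjR, hjS⟩ := Finset.exists_of_ssubset (hsub.ssubset_of_ne (Ne.symm hRS))
          exact le_trans (hin j hjR hjS) (hhead j (hmem2 j hjR hjS))
      refine ⟨?_, ?_, le_trans hT1 hT, ?_, ?_⟩
      · exact (Finset.subset_insert a S).trans hsub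
      · intro i hiR hiS
        by_cases hia : i = a
        · exact hia ▸ List.mem_cons_self (a := a) (l := l)
        · exact List.mem_cons_of_mem a (hmem2 i hiR (by simp [Finset.mem_insert, hia, hiS]))
      · intro i hiR hiS
        by_cases hia : i = a
        · exact hia ▸ hTRa
        · exact hin i hiR (by simp [Finset.mem_insert, hia, hiS])
      · intro i hi hiR
        rcases List.mem_cons.1 hi with h1 | h1
        · exact absurd (h1 ▸ haR) hiR
        · exact hout i h1 hiR
    · -- skip everything
      push_neg at hc
      have hall : ∀ i ∈ a :: l, g i / g' i < Tval g g' ε S := by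
        intro i hi
        rcases List.mem_cons.1 hi with h1 | h1
        · exact h1 ▸ hc
        · exact lt_of_le_of_lt (hhead i h1) hc
      have hRS : (a :: l).foldl (greedyStep g g' ε) S = S := skip_all g g' ε _ S hall
      rw [hRS]
      refine ⟨subset_rfl, fun i hiR hiS => absurd hiR hiS, le_refl _,
        fun i hiR hiS => absurd hiR hiS, fun i hi _ => (hall i hi).le⟩

lemma Hval_eq_Tval {t : ℕ} (g g' : Fin t → ℝ) (ε : ℝ)
    (hg1 : ∑ i, g i = 1) (hg'1 : ∑ i, g' i = 1) (S : Finset (Fin t)) :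
    Hval g g' ε S = Tval g g' ε S := by
  unfold Hval Tval
  rw [Finset.sum_sdiff_eq_sub (Finset.subset_univ S),
    Finset.sum_sdiff_eq_sub (Finset.subset_univ S), hg1, hg'1]
  ring_nf

/-- The greedy algorithm, processing indices in order of decreasing ratio gᵢ/g'ᵢ,
outputs a subset maximizing H over all subsets of [t]. -/
theorem stmt_14 (t : ℕ) (ht : 1 ≤ t) (ε : ℝ) (hε : 0 < ε)
    (g g' : Fin t → ℝ)
    (hg0 : ∀ i, 0 ≤ g i) (hg1 : ∑ i, g i = 1)
    (hg'0 : ∀ i, 0 < g' i) (hg'1 : ∑ i, g' i = 1)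
    (l : List (Fin t)) (hmem : ∀ i, i ∈ l) (hnodup : l.Nodup)
    (hsorted : l.Pairwise (fun i j => g j / g' j ≤ g i / g' i)) :
    ∀ S : Finset (Fin t),
      Hval g g' ε S ≤ Hval g g' ε (l.foldl (greedyStep g g' ε) ∅) := by
  intro S
  have he : 1 < Real.exp ε := by
    have := Real.add_one_le_exp ε
    linarith
  obtain ⟨hsub, hmem2, hT, hin, hout⟩ :=
    greedy_spec g g' ε he hg0 hg'0 l ∅ hsorted (fun i _ => Finset.notMem_empty i) hnodup
  set R := l.foldl (greedyStep g g' ε) ∅ with hR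
  rw [Hval_eq_Tval g g' ε hg1 hg'1, Hval_eq_Tval g g' ε hg1 hg'1]
  set h := Tval g g' ε R with hh
  set e := Real.exp ε with hedef
  -- threshold property
  have hinR : ∀ i ∈ R, h ≤ g i / g' i := fun i hi => hin i hi (Finset.notMem_empty i)
  have houtR : ∀ i, i ∉ R → g i / g' i ≤ h := fun i hi => hout i (hmem i) hi
  have hDR : (0:ℝ) < 1 + (∑ j ∈ R, g' j) * (e - 1) := by
    have : 0 ≤ ∑ j ∈ R, g' j := Finset.sum_nonneg fun j _ => (hg'0 j).le
    nlinarith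
  have hDS : (0:ℝ) < 1 + (∑ j ∈ S, g' j) * (e - 1) := by
    have : 0 ≤ ∑ j ∈ S, g' j := Finset.sum_nonneg fun j _ => (hg'0 j).le
    nlinarith
  have hkey : h * (1 + (∑ j ∈ R, g' j) * (e - 1)) = 1 + (∑ j ∈ R, g j) * (e - 1) := by
    rw [hh]; unfold Tval
    rw [← hedef, div_mul_cancel₀ _ hDR.ne']
  -- f i := g i - h * g' i
  have hfR : ∀ i ∈ R, 0 ≤ g i - h * g' i := by
    intro i hi
    have := (le_div_iff₀ (hg'0 i)).1 (hinR i hi)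
    linarith
  have hfnR : ∀ i, i ∉ R → g i - h * g' i ≤ 0 := by
    intro i hi
    have := (div_le_iff₀ (hg'0 i)).1 (houtR i hi)
    linarith
  have hsum : ∑ i ∈ S, (g i - h * g' i) ≤ ∑ i ∈ R, (g i - h * g' i) := by
    have h1 : ∑ i ∈ S ∩ R, (g i - h * g' i) + ∑ i ∈ S \ R, (g i - h * g' i)
        = ∑ i ∈ S, (g i - h * g' i) := Finset.sum_inter_add_sum_sdiff S R _
    have h2 : ∑ i ∈ S \ R, (g i - h * g' i) ≤ 0 :=
      Finset.sum_nonpos fun i hi => hfnR i (Finset.mem_sdiff.1 hi).2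
    have h3 : ∑ i ∈ S ∩ R, (g i - h * g' i) ≤ ∑ i ∈ R, (g i - h * g' i) :=
      Finset.sum_le_sum_of_subset_of_nonneg (Finset.inter_subset_right)
        fun i hi _ => hfR i hi
    linarith
  rw [Finset.sum_sub_distrib, ← Finset.mul_sum, Finset.sum_sub_distrib, ← Finset.mul_sum]
    at hsum
  unfold Tval
  rw [← hedef, div_le_iff₀ hDS, hh]
  nlinarith [mul_le_mul_of_nonneg_right hsum (by linarith : (0:ℝ) ≤ e - 1)]
end
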